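/- Let α > 1, q > n/(n+α), K > 0, and let f be a radially symmetric probability density on ℝ^n (or on a centered ball) with absolutely continuous radial profile f_r satisfying the first-order nonlinear ODE r^{α-1} f_r(r)^{2-q} = −K f_r'(r) on the interior of its support. Then f is the generalized q-Gaussian G_γ for some γ > 0; i.e., the unique normalized solution of this differential equation is the generalized q-Gaussian. -/

import Mathlib

/-!
Where the radial profile `p` is positive the ODE makes it strictly decreasing, so positivity at
`r` forces positivity on `[0, r]`. There the ODE reads `(p^(q-1))' = -(q-1) r^(α-1) / K` (for
`q = 1`: `(log p)' = -r^(α-1) / K`), which integrates to `p = p(0) · g_γ` with `g_γ` the radial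
profile of the `q`-Gaussian kernel and `γ = 1 / (α K p(0)^(q-1))`. At the first zero `R` of `p`,
continuity forces `g_γ(R) = 0`, and `g_γ` is nonincreasing, so both vanish from `R` on.
Normalization then identifies `p(0)` with `1 / Z(γ)`.
-/

open MeasureTheory Real Filter
open scoped ENNReal Topology NNReal

noncomputable section

/-- The information generating function `M_q[f] = ∫ f(x)^q dx`. -/
def igf (n : ℕ) (q : ℝ) (f : EuclideanSpace ℝ (Fin n) → ℝ) : ℝ :=
  ∫ x : EuclideanSpace ℝ (Fin n), f x ^ q

/-- The elliptic moment of order `α`, `m_α[f] = ∫ ‖x‖^α f(x) dx`. -/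
def ellMoment (n : ℕ) (α : ℝ) (f : EuclideanSpace ℝ (Fin n) → ℝ) : ℝ :=
  ∫ x : EuclideanSpace ℝ (Fin n), ‖x‖ ^ α * f x

/-- The generalized `(β,q)`-Fisher information
`I_{β,q}[f] = ∫ f(x)^{β(q-1)+1} (‖∇f(x)‖ / f(x))^β dx`. -/
def genFisher (n : ℕ) (β q : ℝ) (f : EuclideanSpace ℝ (Fin n) → ℝ) : ℝ :=
  ∫ x : EuclideanSpace ℝ (Fin n), f x ^ (β * (q - 1) + 1) * (‖fderiv ℝ f x‖ / f x) ^ β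

/-- The unnormalized generalized `q`-Gaussian:
`(1 - (q-1) γ ‖x‖^α)_+ ^ (1/(q-1))` for `q ≠ 1` and `exp (-γ ‖x‖^α)` for `q = 1`. -/
def qGaussKernel (n : ℕ) (α q γ : ℝ) (x : EuclideanSpace ℝ (Fin n)) : ℝ :=
  if q = 1 then Real.exp (-(γ * ‖x‖ ^ α))
  else (max (1 - (q - 1) * γ * ‖x‖ ^ α) 0) ^ ((1 : ℝ) / (q - 1))

/-- Partition function `Z(γ)` of the generalized `q`-Gaussian. -/
def Zpart (n : ℕ) (α q γ : ℝ) : ℝ :=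
  ∫ x : EuclideanSpace ℝ (Fin n), qGaussKernel n α q γ x

/-- The generalized `q`-Gaussian density `G_γ` on `ℝ^n`. -/
def qGaussian (n : ℕ) (α q γ : ℝ) (x : EuclideanSpace ℝ (Fin n)) : ℝ :=
  qGaussKernel n α q γ x / Zpart n α q γ

open Set

lemma eq_of_hasDerivAt_zero {g : ℝ → ℝ} {a b : ℝ} (hab : a < b) (hg : ContinuousOn g (Icc a b))
    (hg' : ∀ x ∈ Ioo a b, HasDerivAt g 0 x) : g b = g a := by
  obtain ⟨_, -, hslope⟩ := exists_hasDerivAt_eq_slope g (fun _ => 0) hab hg hg'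
  exact sub_eq_zero.mp <| (div_eq_zero_iff.mp hslope.symm).resolve_right (sub_ne_zero.mpr hab.ne')

def qGaussProfile (α q γ r : ℝ) : ℝ :=
  if q = 1 then exp (-(γ * r ^ α)) else (max (1 - (q - 1) * γ * r ^ α) 0) ^ ((1 : ℝ) / (q - 1))

section qGaussProfile

variable {α q γ : ℝ}

lemma qGaussKernel_eq_qGaussProfile (n : ℕ) (x : EuclideanSpace ℝ (Fin n)) :
    qGaussKernel n α q γ x = qGaussProfile α q γ ‖x‖ := rfl

lemma qGaussProfile_zero (hα : α ≠ 0) : qGaussProfile α q γ 0 = 1 := by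
  unfold qGaussProfile
  split_ifs <;> simp [zero_rpow hα]

lemma qGaussProfile_nonneg (r : ℝ) : 0 ≤ qGaussProfile α q γ r := by
  unfold qGaussProfile
  split_ifs
  · exact (exp_pos _).le
  · exact rpow_nonneg (le_max_right _ _) _

lemma qGaussProfile_antitoneOn (hα : 0 ≤ α) (hγ : 0 ≤ γ) :
    AntitoneOn (qGaussProfile α q γ) (Ici 0) := by
  intro r hr s _ hrs
  have hpow : γ * r ^ α ≤ γ * s ^ α := by gcongr
  unfold qGaussProfile
  rcases lt_trichotomy q 1 with hq | rfl | hq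
  · have hbase : 1 - (q - 1) * γ * r ^ α ≤ 1 - (q - 1) * γ * s ^ α := by nlinarith
    have hbase_pos : 0 < 1 - (q - 1) * γ * r ^ α := by
      nlinarith [mul_nonneg hγ (rpow_nonneg hr α)]
    rw [if_neg hq.ne, if_neg hq.ne, max_eq_left hbase_pos.le,
      max_eq_left (hbase_pos.trans_le hbase).le]
    exact rpow_le_rpow_of_nonpos hbase_pos hbase
      (one_div_neg.2 (sub_neg.2 hq)).le
  · simp only [if_true]
    exact exp_le_exp.2 (by linarith)
  · rw [if_neg hq.ne', if_neg hq.ne']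
    refine rpow_le_rpow (le_max_right _ _) (max_le_max_right 0 (by nlinarith)) ?_
    exact (one_div_pos.2 (by linarith)).le

end qGaussProfile

section ODE

variable {p : ℝ → ℝ} {α q K r : ℝ}

lemma hasDerivAt_of_ode (hK : K ≠ 0) (hd : DifferentiableAt ℝ p r)
    (hode : r ^ (α - 1) * p r ^ (2 - q) = -(K * deriv p r)) :
    HasDerivAt p (-(r ^ (α - 1) * p r ^ (2 - q)) / K) r := by
  have hderiv : deriv p r = -(r ^ (α - 1) * p r ^ (2 - q)) / K := by
    rw [hode]
    field_simp
  exact hderiv ▸ hd.hasDerivAt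

lemma rpow_eq_of_ode (hα : 0 < α) (hK : K ≠ 0) (hq : q ≠ 1) (hr : 0 < r)
    (hcont : ContinuousOn p (Icc 0 r)) (hpos : ∀ s ∈ Icc 0 r, 0 < p s)
    (hderiv : ∀ s ∈ Ioo 0 r, HasDerivAt p (-(s ^ (α - 1) * p s ^ (2 - q)) / K) s) :
    p r ^ (q - 1) = p 0 ^ (q - 1) - (q - 1) / (α * K) * r ^ α := by
  set h : ℝ → ℝ := fun s => p s ^ (q - 1) + (q - 1) / (α * K) * s ^ α
  have hh : ∀ s ∈ Ioo 0 r, HasDerivAt h 0 s := by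
    intro s hs
    have hps := hpos s (Ioo_subset_Icc_self hs)
    have hinv : p s ^ (2 - q) * p s ^ (q - 1 - 1) = 1 := by
      rw [← rpow_add hps, show 2 - q + (q - 1 - 1) = 0 by ring, rpow_zero]
    refine (((hderiv s hs).rpow_const (Or.inl hps.ne')).add
      ((hasDerivAt_rpow_const (Or.inl hs.1.ne')).const_mul ((q - 1) / (α * K)))).congr_deriv ?_
    have hpow : (q - 1) / (α * K) * (α * s ^ (α - 1)) = (q - 1) * s ^ (α - 1) / K := by
      field_simp
    rw [hpow]
    linear_combination -((q - 1) * s ^ (α - 1) / K) * hinv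
  have hcont_h : ContinuousOn h (Icc 0 r) :=
    (hcont.rpow_const fun s hs => Or.inl (hpos s hs).ne').add
      (continuousOn_const.mul (continuousOn_id.rpow_const fun _ _ => Or.inr hα.le))
  have := eq_of_hasDerivAt_zero hr hcont_h hh
  simp only [h, zero_rpow hα.ne', mul_zero, add_zero] at this
  linear_combination this

lemma log_eq_of_ode (hα : 0 < α) (hK : K ≠ 0) (hr : 0 < r)
    (hcont : ContinuousOn p (Icc 0 r)) (hpos : ∀ s ∈ Icc 0 r, 0 < p s)
    (hderiv : ∀ s ∈ Ioo 0 r, HasDerivAt p (-(s ^ (α - 1) * p s) / K) s) :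
    log (p r) = log (p 0) - r ^ α / (α * K) := by
  set h : ℝ → ℝ := fun s => log (p s) + s ^ α / (α * K)
  have hh : ∀ s ∈ Ioo 0 r, HasDerivAt h 0 s := by
    intro s hs
    have hps := hpos s (Ioo_subset_Icc_self hs)
    refine (((hderiv s hs).log hps.ne').add
      ((hasDerivAt_rpow_const (Or.inl hs.1.ne')).div_const (α * K))).congr_deriv ?_
    field_simp
    ring
  have hcont_h : ContinuousOn h (Icc 0 r) :=
    (hcont.log fun s hs => (hpos s hs).ne').add
      ((continuousOn_id.rpow_const fun _ _ => Or.inr hα.le).div_const _)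
  have := eq_of_hasDerivAt_zero hr hcont_h hh
  simp only [h, zero_rpow hα.ne', zero_div, add_zero] at this
  linear_combination this

lemma eq_mul_qGaussProfile_of_ode (hα : 0 < α) (hK : K ≠ 0) (hr : 0 ≤ r)
    (hcont : ContinuousOn p (Icc 0 r)) (hpos : ∀ s ∈ Icc 0 r, 0 < p s)
    (hderiv : ∀ s ∈ Ioo 0 r, HasDerivAt p (-(s ^ (α - 1) * p s ^ (2 - q)) / K) s) :
    p r = p 0 * qGaussProfile α q (α * K * p 0 ^ (q - 1))⁻¹ r := by
  rcases hr.eq_or_lt with rfl | hr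
  · rw [qGaussProfile_zero hα.ne', mul_one]
  have hp0 := hpos 0 (left_mem_Icc.2 hr.le)
  have hpr := hpos r (right_mem_Icc.2 hr.le)
  unfold qGaussProfile
  split_ifs with hq
  · subst hq
    have hlog := log_eq_of_ode hα hK hr hcont hpos
      (by simpa only [show (2 : ℝ) - 1 = 1 by norm_num, rpow_one] using hderiv)
    rw [← exp_log hpr, hlog, sub_eq_add_neg, exp_add, exp_log hp0, sub_self, rpow_zero]
    field_simp
  · have hp0q := rpow_pos_of_pos hp0 (q - 1)
    have hbase : 1 - (q - 1) * (α * K * p 0 ^ (q - 1))⁻¹ * r ^ α = (p r / p 0) ^ (q - 1) := by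
      rw [div_rpow hpr.le hp0.le, rpow_eq_of_ode hα hK hq hr hcont hpos hderiv]
      field_simp
    rw [hbase, max_eq_left (by positivity), ← rpow_mul (by positivity),
      mul_one_div_cancel (sub_ne_zero.2 hq), rpow_one, mul_div_cancel₀ _ hp0.ne']

end ODE

section RadialProfile

variable {p g : ℝ → ℝ}

lemma pos_of_le_of_deriv_neg (hcont : Continuous p) (hderiv : ∀ r, 0 < r → 0 < p r → deriv p r < 0)
    ⦃r s : ℝ⦄ (hs : 0 ≤ s) (hsr : s ≤ r) (hr : 0 < p r) : 0 < p s := by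
  by_contra! hps
  obtain ⟨S, ⟨⟨hS0, hSr⟩, (hpS : p S ≤ 0)⟩, hSmax⟩ :=
    (isCompact_Icc.inter_right (isClosed_le hcont continuous_const)).exists_isGreatest
      ⟨s, ⟨hs, hsr⟩, hps⟩
  have hSr' : S < r := hSr.lt_of_ne (by rintro rfl; exact hpS.not_gt hr)
  have hpos : ∀ t ∈ Ioc S r, 0 < p t := fun t ht =>
    lt_of_not_ge fun hpt => ht.1.not_ge (hSmax ⟨⟨hS0.trans ht.1.le, ht.2⟩, hpt⟩)
  have hanti : StrictAntiOn p (Icc S r) := by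
    refine strictAntiOn_of_deriv_neg (convex_Icc S r) hcont.continuousOn fun t ht => ?_
    rw [interior_Icc] at ht
    exact hderiv t (hS0.trans_lt ht.1) (hpos t (Ioo_subset_Ioc_self ht))
  linarith [hanti (left_mem_Icc.2 hSr) (right_mem_Icc.2 hSr) hSr']

lemma eq_of_eq_on_pos_of_antitoneOn (hcont : Continuous p) (hnonneg : ∀ r, 0 ≤ r → 0 ≤ p r)
    (hp0 : 0 < p 0) (hg : AntitoneOn g (Ici 0)) (hg_nonneg : ∀ r, 0 ≤ g r)
    (heq : ∀ r, 0 ≤ r → 0 < p r → p r = g r) {r : ℝ} (hr : 0 ≤ r) : p r = g r := by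
  rcases (hnonneg r hr).lt_or_eq with hpr | hpr
  · exact heq r hr hpr
  obtain ⟨R, ⟨⟨hR0, hRr⟩, (hpR : p R ≤ 0)⟩, hRmin⟩ :=
    (isCompact_Icc.inter_right (isClosed_le hcont continuous_const)).exists_isLeast
      ⟨r, ⟨hr, le_rfl⟩, hpr.ge⟩
  have hR : 0 < R := hR0.lt_of_ne (by rintro rfl; exact hpR.not_gt hp0)
  have hgR : g R ≤ p R := by
    refine ge_of_tendsto
      (hcont.continuousAt.tendsto.mono_left (nhdsWithin_le_nhds (s := Iio R))) ?_
    filter_upwards [Ioo_mem_nhdsLT hR] with t ht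
    have hpt : 0 < p t := lt_of_not_ge fun hpt =>
      ht.2.not_ge (hRmin ⟨⟨ht.1.le, ht.2.le.trans hRr⟩, hpt⟩)
    rw [heq t ht.1.le hpt]
    exact hg ht.1.le hR0 ht.2.le
  linarith [hg hR0 hr hRr, hg_nonneg r]

end RadialProfile

lemma eq_div_integral_of_eq_const_mul {E : Type*} [MeasurableSpace E] {μ : Measure E}
    {f k : E → ℝ} {c : ℝ} (hf : ∀ x, f x = c * k x) (hf1 : ∫ x, f x ∂μ = 1) :
    f = fun x => k x / ∫ x, k x ∂μ := by
  have hck : c * ∫ x, k x ∂μ = 1 := by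
    rw [← integral_const_mul, ← hf1]
    simp only [hf]
  funext x
  rw [hf, eq_div_iff (right_ne_zero_of_mul_eq_one hck), mul_right_comm, hck, one_mul]

theorem ode_solution_is_qGaussian_general
    (n : ℕ) (hn : 0 < n) (α q K : ℝ) (hα : 1 < α)
    (hK : 0 < K)
    (f : EuclideanSpace ℝ (Fin n) → ℝ) (fr : ℝ → ℝ)
    (hrad : ∀ x, f x = fr ‖x‖)
    (hnonneg : ∀ x, 0 ≤ f x)
    (hnorm : ∫ x : EuclideanSpace ℝ (Fin n), f x = 1)
    (hcont : Continuous fr)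
    (hdiff : ∀ r : ℝ, 0 < r → 0 < fr r → DifferentiableAt ℝ fr r)
    (hODE : ∀ r : ℝ, 0 < r → 0 < fr r →
      r ^ (α - 1) * fr r ^ (2 - q) = -(K * deriv fr r)) :
    ∃ γ > (0 : ℝ), f = qGaussian n α q γ := by
  have hα0 : 0 < α := by linarith
  have : Nonempty (Fin n) := ⟨⟨0, hn⟩⟩
  have hfr_nonneg : ∀ r, 0 ≤ r → 0 ≤ fr r := fun r hr => by
    obtain ⟨x, rfl⟩ := exists_norm_eq (EuclideanSpace ℝ (Fin n)) hr
    exact hrad x ▸ hnonneg x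
  have hderiv : ∀ r, 0 < r → 0 < fr r →
      HasDerivAt fr (-(r ^ (α - 1) * fr r ^ (2 - q)) / K) r := fun r hr hpr =>
    hasDerivAt_of_ode hK.ne' (hdiff r hr hpr) (hODE r hr hpr)
  have hpos_of_le : ∀ ⦃r s⦄, 0 ≤ s → s ≤ r → 0 < fr r → 0 < fr s :=
    pos_of_le_of_deriv_neg hcont fun r hr hpr =>
      (hderiv r hr hpr).deriv ▸ div_neg_of_neg_of_pos (neg_neg_of_pos (by positivity)) hK
  have hfr0 : 0 < fr 0 := by
    by_contra! h
    have hf : ∀ x, f x = 0 := fun x => by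
      rw [hrad]
      exact (not_lt.1 fun hx => h.not_gt (hpos_of_le le_rfl (norm_nonneg x) hx)).antisymm
        (hfr_nonneg _ (norm_nonneg x))
    simp [hf] at hnorm
  set γ := (α * K * fr 0 ^ (q - 1))⁻¹
  have hγ : 0 < γ := by positivity
  have hprofile : ∀ r, 0 ≤ r → fr r = fr 0 * qGaussProfile α q γ r := fun r hr =>
    eq_of_eq_on_pos_of_antitoneOn hcont hfr_nonneg hfr0
      (fun a ha b hb hab =>
        mul_le_mul_of_nonneg_left (qGaussProfile_antitoneOn hα0.le hγ.le ha hb hab) hfr0.le)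
      (fun r => mul_nonneg hfr0.le (qGaussProfile_nonneg r))
      (fun r hr hpr => eq_mul_qGaussProfile_of_ode hα0 hK.ne' hr hcont.continuousOn
        (fun s hs => hpos_of_le hs.1 hs.2 hpr)
        (fun s hs => hderiv s hs.1 (hpos_of_le hs.1.le hs.2.le hpr))) hr
  refine ⟨γ, hγ, eq_div_integral_of_eq_const_mul (c := fr 0) (fun x => ?_) hnorm⟩
  rw [hrad, hprofile _ (norm_nonneg x), qGaussKernel_eq_qGaussProfile]

/-- **The unique normalized solution of the differential equation
`r^{α-1} f_r(r)^{2-q} = -K f_r'(r)` is the generalized `q`-Gaussian.**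
Let `α > 1`, `q > n/(n+α)`, `K > 0`, and let `f` be a radially symmetric probability
density on `ℝ^n` (possibly supported on a centered ball) with absolutely continuous
radial profile `fr` satisfying the ODE on the interior of its support. Then
`f = G_γ` for some `γ > 0`. -/
theorem ode_solution_is_qGaussian
    (n : ℕ) (hn : 0 < n) (α q K : ℝ) (hα : 1 < α)
    (hq : (n : ℝ) / ((n : ℝ) + α) < q) (hK : 0 < K)
    (f : EuclideanSpace ℝ (Fin n) → ℝ) (fr : ℝ → ℝ)
    (hrad : ∀ x, f x = fr ‖x‖)
    (hnonneg : ∀ x, 0 ≤ f x)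
    (hnorm : ∫ x : EuclideanSpace ℝ (Fin n), f x = 1)
    (hcont : Continuous fr)
    (hdiff : ∀ r : ℝ, 0 < r → 0 < fr r → DifferentiableAt ℝ fr r)
    (hODE : ∀ r : ℝ, 0 < r → 0 < fr r →
      r ^ (α - 1) * fr r ^ (2 - q) = -(K * deriv fr r)) :
    ∃ γ > (0 : ℝ), f = qGaussian n α q γ :=
  ode_solution_is_qGaussian_general n hn α q K hα hK f fr hrad hnonneg hnorm hcont hdiff hODE
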